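/- arXiv:2601.10252 — 2 statements merged into one kernel-verified Lean document; each statement's English description precedes it below -/
import Mathlib

section
/- Let C : [0,1]² → ℝ be continuous on [0,1]² and three times continuously differentiable on (0,1)², with all second-order partial derivatives bounded in absolute value by M₂ and all third-order partial derivatives bounded in absolute value by M₃ on (0,1)². Then for every integer m ≥ 1, sup_{(u,v)∈[0,1]²} |T_m C(u,v) − C(u,v)| ≤ M₂/(4m²) + 16·M₃/m³; in particular the checkerboard approximation error is O(m⁻²) uniformly on [0,1]². -/
open MeasureTheory Filter Set ProbabilityTheory

/-- Index of the checkerboard cell containing `u`, with the convention `i = m` when `u = 1`. -/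
noncomputable def cbIdx (m : ℕ) (u : ℝ) : ℕ :=
  if u = 1 then m else Nat.floor ((m : ℝ) * u) + 1

/-- The checkerboard (bilinear interpolation) operator `T_m`. -/
noncomputable def cbT (m : ℕ) (f : ℝ × ℝ → ℝ) (p : ℝ × ℝ) : ℝ :=
  let i := cbIdx m p.1
  let j := cbIdx m p.2
  let μu : ℝ := (m : ℝ) * p.1 - ((i : ℝ) - 1)
  let μv : ℝ := (m : ℝ) * p.2 - ((j : ℝ) - 1)
  (1 - μu) * (1 - μv) * f (((i : ℝ) - 1) / m, ((j : ℝ) - 1) / m)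
    + μu * (1 - μv) * f ((i : ℝ) / m, ((j : ℝ) - 1) / m)
    + (1 - μu) * μv * f (((i : ℝ) - 1) / m, (j : ℝ) / m)
    + μu * μv * f ((i : ℝ) / m, (j : ℝ) / m)

/-- The unit square `[0,1]²`. -/
def unitSq : Set (ℝ × ℝ) := Set.Icc (0 : ℝ) 1 ×ˢ Set.Icc (0 : ℝ) 1

/-- The open unit square `(0,1)²`. -/
def openSq : Set (ℝ × ℝ) := Set.Ioo (0 : ℝ) 1 ×ˢ Set.Ioo (0 : ℝ) 1

/-!
`T_m C - C` at a point of a grid cell is a convex combination of the linear-interpolation errors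
of `C` along the two horizontal edges of the cell, plus the linear-interpolation error along the
vertical segment through the point. Along a segment `x + t • (h • e)`, `0 ≤ t ≤ 1`, on which
`|D²f[e, e]| ≤ K`, both functions `t ↦ ±f(x + t • (h • e)) + h²K t²/2` are convex, so the
interpolation error is at most `h²K μ(1 - μ)/2 ≤ h²K/8`. Segments on the boundary of the square,
where `C` is only continuous, are first pushed into the open square and then recovered in the
limit. With `h = 1/m` and `K = M₂` this bounds the error by `2 · M₂/(8m²) = M₂/(4m²)`.
-/

open Topology

theorem convexOn_add_half_mul_sq {D : Set ℝ} (hD : Convex ℝ D) {f f' f'' : ℝ → ℝ} {M : ℝ}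
    (hf : ContinuousOn f D) (hf' : ∀ x ∈ interior D, HasDerivAt f (f' x) x)
    (hf'' : ∀ x ∈ interior D, HasDerivAt f' (f'' x) x) (hM : ∀ x ∈ interior D, -M ≤ f'' x) :
    ConvexOn ℝ D fun x => f x + M / 2 * x ^ 2 := by
  refine convexOn_of_hasDerivWithinAt2_nonneg (f' := fun x => f' x + M * x)
    (f'' := fun x => f'' x + M) hD (hf.add (by fun_prop)) (fun x hx => ?_) (fun x hx => ?_)
    (fun x hx => by linarith [hM x hx])
  · have hsq := (hasDerivAt_pow 2 x).const_mul (M / 2)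
    exact ((hf' x hx).add hsq).hasDerivWithinAt.congr_deriv (by ring)
  · exact ((hf'' x hx).add ((hasDerivAt_id x).const_mul M)).hasDerivWithinAt.congr_deriv
      (by simp)

theorem abs_chord_sub_le_of_abs_deriv2_le {g g' g'' : ℝ → ℝ} {K : ℝ}
    (hg : ContinuousOn g (Icc 0 1)) (hg' : ∀ t ∈ Ioo (0 : ℝ) 1, HasDerivAt g (g' t) t)
    (hg'' : ∀ t ∈ Ioo (0 : ℝ) 1, HasDerivAt g' (g'' t) t) (hK : ∀ t ∈ Ioo (0 : ℝ) 1, |g'' t| ≤ K)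
    {μ : ℝ} (hμ : μ ∈ Icc (0 : ℝ) 1) :
    |(1 - μ) * g 0 + μ * g 1 - g μ| ≤ K / 8 := by
  have hK₀ : 0 ≤ K := (abs_nonneg _).trans (hK (1 / 2) (by norm_num))
  rw [← interior_Icc] at hg' hg'' hK
  have chord {σ : ℝ} (hσ : |σ| = 1) :
      g μ * σ + K / 2 * μ ^ 2 ≤ (1 - μ) * (g 0 * σ) + μ * (g 1 * σ + K / 2) := by
    have hconv := convexOn_add_half_mul_sq (M := K) (convex_Icc 0 1) (hg.mul continuousOn_const)
      (fun t ht => (hg' t ht).mul_const σ) (fun t ht => (hg'' t ht).mul_const σ)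
      (fun t ht => (abs_le.1 ((abs_mul _ _).trans_le (by rw [hσ, mul_one]; exact hK t ht))).1)
    simpa using hconv.2 (left_mem_Icc.2 zero_le_one) (right_mem_Icc.2 zero_le_one)
      (sub_nonneg.2 hμ.2) hμ.1 (sub_add_cancel 1 μ)
  have upper := chord (σ := 1) abs_one
  have lower := chord (σ := -1) (by simp)
  rw [abs_le]
  constructor <;> nlinarith [sq_nonneg (μ - 1 / 2)]

section NormedSpace

variable {E : Type*} [NormedAddCommGroup E] [NormedSpace ℝ E]

theorem abs_iteratedFDerivWithin_two_smul_le {f : E → ℝ} {U : Set E} {q e : E} {K : ℝ}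
    (hK : |iteratedFDerivWithin ℝ 2 f U q ![e, e]| ≤ K) (h : ℝ) :
    |iteratedFDerivWithin ℝ 2 f U q ![h • e, h • e]| ≤ h ^ 2 * K := by
  have hsmul : ![h • e, h • e] = fun i => (fun _ => h) i • ![e, e] i := by
    ext i; fin_cases i <;> rfl
  rw [hsmul, ContinuousMultilinearMap.map_smul_univ, smul_eq_mul, abs_mul]
  simpa [sq] using mul_le_mul_of_nonneg_left hK (mul_self_nonneg h)

theorem abs_chord_sub_le_of_isOpen {f : E → ℝ} {U : Set E} (hU : IsOpen U) (hUc : Convex ℝ U)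
    (hf : ContDiffOn ℝ 2 f U) {e : E} {K : ℝ}
    (hK : ∀ q ∈ U, |iteratedFDerivWithin ℝ 2 f U q ![e, e]| ≤ K)
    {x y : E} (hx : x ∈ U) (hy : y ∈ U) {h : ℝ} (hxy : y - x = h • e)
    {μ : ℝ} (hμ : μ ∈ Icc (0 : ℝ) 1) :
    |(1 - μ) * f x + μ * f y - f ((1 - μ) • x + μ • y)| ≤ h ^ 2 * K / 8 := by
  set γ : ℝ → E := fun t => x + t • (y - x)
  have hγU : ∀ t ∈ Icc (0 : ℝ) 1, γ t ∈ U := fun t ht => hUc.add_smul_sub_mem hx hy ht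
  have hγ (t : ℝ) : HasDerivAt γ (y - x) t := by
    simpa only [one_smul] using ((hasDerivAt_id' t).smul_const (y - x)).const_add x
  have hf₂ : ∀ t ∈ Icc (0 : ℝ) 1, ContDiffAt ℝ 2 f (γ t) :=
    fun t ht => hf.contDiffAt (hU.mem_nhds (hγU t ht))
  have hd₁ : ∀ t ∈ Icc (0 : ℝ) 1, HasDerivAt (f ∘ γ) (fderiv ℝ f (γ t) (y - x)) t :=
    fun t ht => ((hf₂ t ht).differentiableAt two_ne_zero).hasFDerivAt.comp_hasDerivAt t (hγ t)
  have hd₂ : ∀ t ∈ Icc (0 : ℝ) 1, HasDerivAt (fun t => fderiv ℝ f (γ t) (y - x))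
      (iteratedFDerivWithin ℝ 2 f U (γ t) ![y - x, y - x]) t := by
    intro t ht
    rw [iteratedFDerivWithin_of_isOpen 2 hU (hγU t ht), iteratedFDeriv_two_apply]
    have hD := (((hf₂ t ht).fderiv_right (m := 1) le_rfl).differentiableAt
      one_ne_zero).hasFDerivAt.comp_hasDerivAt t (hγ t)
    simpa using hD.clm_apply (hasDerivAt_const t (y - x))
  have hchord := abs_chord_sub_le_of_abs_deriv2_le
    (fun t ht => (hd₁ t ht).continuousAt.continuousWithinAt)
    (fun t ht => hd₁ t (Ioo_subset_Icc_self ht)) (fun t ht => hd₂ t (Ioo_subset_Icc_self ht))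
    (fun t ht => hxy ▸
      abs_iteratedFDerivWithin_two_smul_le (hK _ (hγU t (Ioo_subset_Icc_self ht))) h) hμ
  convert hchord using 4
  · simp [γ]
  · simp [γ]
  · simp only [Function.comp_apply, γ]; congr 1; module

theorem abs_chord_sub_le_of_closure {f : E → ℝ} {U : Set E} (hU : IsOpen U) (hUc : Convex ℝ U)
    (hfc : ContinuousOn f (closure U)) (hf : ContDiffOn ℝ 2 f U) {e : E} {K : ℝ}
    (hK : ∀ q ∈ U, |iteratedFDerivWithin ℝ 2 f U q ![e, e]| ≤ K)
    {x y : E} (hx : x ∈ closure U) (hy : y ∈ closure U) {h : ℝ} (hxy : y - x = h • e)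
    {μ : ℝ} (hμ : μ ∈ Icc (0 : ℝ) 1) :
    |(1 - μ) * f x + μ * f y - f ((1 - μ) • x + μ • y)| ≤ h ^ 2 * K / 8 := by
  obtain ⟨q, hq⟩ : U.Nonempty := closure_nonempty_iff.1 ⟨x, hx⟩
  set φ : ℝ → E → E := fun ε z => (1 - ε) • z + ε • q
  have hφU : ∀ z ∈ closure U, ∀ ε ∈ Ioo (0 : ℝ) 1, φ ε z ∈ U := fun z hz ε hε => by
    have := hUc.combo_closure_interior_mem_interior hz (hU.interior_eq.symm ▸ hq)
      (sub_nonneg.2 hε.2.le) hε.1 (sub_add_cancel 1 ε)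
    rwa [hU.interior_eq] at this
  have hφlim : ∀ z ∈ closure U, Tendsto (fun ε => f (φ ε z)) (𝓝[>] 0) (𝓝 (f z)) := by
    intro z hz
    refine (hfc z hz).tendsto.comp (tendsto_nhdsWithin_iff.2 ⟨?_, ?_⟩)
    · have hφ : Continuous fun ε => φ ε z := by fun_prop
      simpa [φ] using (hφ.tendsto 0).mono_left nhdsWithin_le_nhds
    · filter_upwards [Ioo_mem_nhdsGT zero_lt_one] with ε hε
      exact subset_closure (hφU z hz ε hε)
  set w := (1 - μ) • x + μ • y
  have hw : w ∈ closure U := hUc.closure hx hy (sub_nonneg.2 hμ.2) hμ.1 (sub_add_cancel 1 μ)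
  have hlim := ((((hφlim x hx).const_mul (1 - μ)).add ((hφlim y hy).const_mul μ)).sub
    (hφlim w hw)).abs
  refine le_of_tendsto hlim ?_
  filter_upwards [Ioo_mem_nhdsGT zero_lt_one] with ε hε
  have hφw : φ ε w = (1 - μ) • φ ε x + μ • φ ε y := by simp only [φ, w]; module
  have hφxy : φ ε y - φ ε x = ((1 - ε) * h) • e := by
    rw [← smul_smul, ← hxy]; simp only [φ]; module
  rw [hφw]
  calc _ ≤ ((1 - ε) * h) ^ 2 * K / 8 :=
        abs_chord_sub_le_of_isOpen hU hUc hf hK (hφU x hx ε hε) (hφU y hy ε hε) hφxy hμ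
    _ ≤ h ^ 2 * K / 8 := by
        have hK₀ : 0 ≤ K := (abs_nonneg _).trans (hK q hq)
        have : (1 - ε) ^ 2 ≤ 1 := by nlinarith [hε.1, hε.2]
        rw [mul_pow]
        gcongr
        nlinarith [sq_nonneg h]

end NormedSpace

theorem abs_bilinear_sub_le {F : ℝ × ℝ → ℝ} {a b c d u v μ ν K : ℝ} (hν : ν ∈ Icc (0 : ℝ) 1)
    (hc : |(1 - μ) * F (a, c) + μ * F (b, c) - F (u, c)| ≤ K)
    (hd : |(1 - μ) * F (a, d) + μ * F (b, d) - F (u, d)| ≤ K)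
    (hv : |(1 - ν) * F (u, c) + ν * F (u, d) - F (u, v)| ≤ K) :
    |(1 - μ) * (1 - ν) * F (a, c) + μ * (1 - ν) * F (b, c) + (1 - μ) * ν * F (a, d)
      + μ * ν * F (b, d) - F (u, v)| ≤ 2 * K := by
  have hν₀ : 0 ≤ ν := hν.1
  have hν₁ : 0 ≤ 1 - ν := sub_nonneg.2 hν.2
  calc _ = |(1 - ν) * ((1 - μ) * F (a, c) + μ * F (b, c) - F (u, c))
          + ν * ((1 - μ) * F (a, d) + μ * F (b, d) - F (u, d))
          + ((1 - ν) * F (u, c) + ν * F (u, d) - F (u, v))| := by ring_nf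
    _ ≤ (1 - ν) * K + ν * K + K := by
        refine (abs_add_le _ _).trans (add_le_add ((abs_add_le _ _).trans ?_) hv)
        rw [abs_mul, abs_mul, abs_of_nonneg hν₀, abs_of_nonneg hν₁]
        gcongr
    _ = 2 * K := by ring

/-- The paper's `μ(u)`. -/
noncomputable def cbWeight (m : ℕ) (u : ℝ) : ℝ := m * u - ((cbIdx m u : ℝ) - 1)

theorem cbIdx_cell {m : ℕ} (hm : 1 ≤ m) {u : ℝ} (hu : u ∈ Icc (0 : ℝ) 1) :
    ((cbIdx m u : ℝ) - 1) / m ∈ Icc (0 : ℝ) 1 ∧ (cbIdx m u : ℝ) / m ∈ Icc (0 : ℝ) 1 ∧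
      cbWeight m u ∈ Icc (0 : ℝ) 1 ∧
      (1 - cbWeight m u) * (((cbIdx m u : ℝ) - 1) / m) + cbWeight m u * ((cbIdx m u : ℝ) / m)
        = u := by
  have hm' : (1 : ℝ) ≤ m := by exact_mod_cast hm
  obtain ⟨hi₁, him, hlo, hhi⟩ : (1 : ℝ) ≤ cbIdx m u ∧ (cbIdx m u : ℝ) ≤ m ∧
      (cbIdx m u : ℝ) - 1 ≤ m * u ∧ m * u ≤ cbIdx m u := by
    unfold cbIdx
    split_ifs with h1
    · subst h1; simp [hm']
    · have hmu : 0 ≤ (m : ℝ) * u := mul_nonneg (by positivity) hu.1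
      have hlt : (m : ℝ) * u < m := by nlinarith [lt_of_le_of_ne hu.2 h1]
      have hfl : ⌊(m : ℝ) * u⌋₊ < m := (Nat.floor_lt hmu).2 hlt
      push_cast
      refine ⟨by linarith [Nat.cast_nonneg (α := ℝ) ⌊(m : ℝ) * u⌋₊], ?_, ?_, ?_⟩
      · exact_mod_cast hfl
      · linarith [Nat.floor_le hmu]
      · exact (Nat.lt_floor_add_one _).le
  have hm₀ : (0 : ℝ) < m := by linarith
  refine ⟨⟨by positivity, ?_⟩, ⟨by positivity, ?_⟩, ⟨?_, ?_⟩, ?_⟩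
  · rw [div_le_one hm₀]; linarith
  · rw [div_le_one hm₀]; linarith
  · unfold cbWeight; linarith
  · unfold cbWeight; linarith
  · unfold cbWeight; field_simp; ring

theorem abs_cbT_sub_le {f : ℝ × ℝ → ℝ} {m : ℕ} (hm : 1 ≤ m) {K : ℝ}
    (hchord : ∀ e : ℝ × ℝ, (e = (1, 0) ∨ e = (0, 1)) → ∀ x ∈ unitSq, ∀ y ∈ unitSq,
      y - x = (m : ℝ)⁻¹ • e → ∀ μ ∈ Icc (0 : ℝ) 1,
        |(1 - μ) * f x + μ * f y - f ((1 - μ) • x + μ • y)| ≤ K) :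
    ∀ p ∈ unitSq, |cbT m f p - f p| ≤ 2 * K := by
  rintro ⟨u, v⟩ ⟨hu, hv : v ∈ Icc (0 : ℝ) 1⟩
  simp only at hu
  obtain ⟨ha, hb, hμ, hu_eq⟩ := cbIdx_cell hm hu
  obtain ⟨hc, hd, hν, hv_eq⟩ := cbIdx_cell hm hv
  have hstep (i : ℝ) : i / m - (i - 1) / m = (m : ℝ)⁻¹ := by ring
  have horiz : ∀ s ∈ Icc (0 : ℝ) 1, |(1 - cbWeight m u) * f ((cbIdx m u - 1) / m, s)
      + cbWeight m u * f (cbIdx m u / m, s) - f (u, s)| ≤ K := by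
    intro s hs
    have hseg := hchord _ (Or.inl rfl) (_, s) ⟨ha, hs⟩ (_, s) ⟨hb, hs⟩ (by simp [hstep]) _ hμ
    simpa only [Prod.smul_mk, Prod.mk_add_mk, smul_eq_mul, hu_eq, ← add_mul, sub_add_cancel,
      one_mul] using hseg
  have vert : |(1 - cbWeight m v) * f (u, (cbIdx m v - 1) / m)
      + cbWeight m v * f (u, cbIdx m v / m) - f (u, v)| ≤ K := by
    have hseg := hchord _ (Or.inr rfl) (u, _) ⟨hu, hc⟩ (u, _) ⟨hu, hd⟩ (by simp [hstep]) _ hν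
    simpa only [Prod.smul_mk, Prod.mk_add_mk, smul_eq_mul, hv_eq, ← add_mul, sub_add_cancel,
      one_mul] using hseg
  exact abs_bilinear_sub_le hν (horiz _ hc) (horiz _ hd) vert

theorem isOpen_openSq : IsOpen openSq := isOpen_Ioo.prod isOpen_Ioo

theorem convex_openSq : Convex ℝ openSq := (convex_Ioo 0 1).prod (convex_Ioo 0 1)

theorem closure_openSq : closure openSq = unitSq := by
  rw [openSq, unitSq, closure_prod_eq, closure_Ioo zero_ne_one]

/-- checkerboard approximation error under bounded second- and third-order
partial derivatives: `sup_{[0,1]²} |T_m C − C| ≤ M₂/(4m²) + 16 M₃/m³`. -/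
theorem cbT_smooth_error (C : ℝ × ℝ → ℝ) (M₂ M₃ : ℝ)
    (hCcont : ContinuousOn C unitSq)
    (hC3 : ContDiffOn ℝ 3 C openSq)
    (h2 : ∀ p ∈ openSq, ∀ w : Fin 2 → ℝ × ℝ,
      (∀ k, w k = ((1 : ℝ), (0 : ℝ)) ∨ w k = ((0 : ℝ), (1 : ℝ))) →
      |iteratedFDerivWithin ℝ 2 C openSq p w| ≤ M₂)
    (h3 : ∀ p ∈ openSq, ∀ w : Fin 3 → ℝ × ℝ,
      (∀ k, w k = ((1 : ℝ), (0 : ℝ)) ∨ w k = ((0 : ℝ), (1 : ℝ))) →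
      |iteratedFDerivWithin ℝ 3 C openSq p w| ≤ M₃)
    (m : ℕ) (hm : 1 ≤ m) :
    ∀ p ∈ unitSq, |cbT m C p - C p| ≤ M₂ / (4 * (m : ℝ) ^ 2) + 16 * M₃ / (m : ℝ) ^ 3 := by
  have hM₃ : 0 ≤ M₃ := (abs_nonneg _).trans (h3 (1 / 2, 1 / 2) (by norm_num [openSq])
    (fun _ => (1, 0)) fun _ => Or.inl rfl)
  have hC₂ : ContDiffOn ℝ 2 C openSq := hC3.of_le (by norm_num)
  have hcoord {e : ℝ × ℝ} (he : e = (1, 0) ∨ e = (0, 1)) :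
      ∀ q ∈ openSq, |iteratedFDerivWithin ℝ 2 C openSq q ![e, e]| ≤ M₂ :=
    fun q hq => h2 q hq ![e, e] fun k => by fin_cases k <;> exact he
  intro p hp
  have hT := abs_cbT_sub_le hm (K := (m : ℝ)⁻¹ ^ 2 * M₂ / 8)
    (fun e he x hx y hy hxy μ hμ => abs_chord_sub_le_of_closure isOpen_openSq convex_openSq
      (closure_openSq ▸ hCcont) hC₂ (hcoord he) (closure_openSq ▸ hx) (closure_openSq ▸ hy)
      hxy hμ) p hp
  calc |cbT m C p - C p| ≤ M₂ / (4 * (m : ℝ) ^ 2) := by convert hT using 1; field_simp; ring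
    _ ≤ _ := le_add_of_nonneg_right (by positivity)
end

section
/- (Lipschitz-with-jump bound for the weighted empirical copula.) Let (X_1,Y_1), …, (X_n,Y_n) be points in ℝ² such that X_1,…,X_n are pairwise distinct and Y_1,…,Y_n are pairwise distinct, and let w_1, …, w_n be positive weights with Σ_{i=1}^n w_i = 1; set Δ = max_{1≤i≤n} w_i. Then for all (u₁,v₁), (u₂,v₂) ∈ (0,1]², the weighted empirical copula satisfies |Ĉ^w(u₂,v₂) − Ĉ^w(u₁,v₁)| ≤ |u₂ − u₁| + |v₂ − v₁| + 2Δ. -/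
/-!
The joint distribution function `H^w` moves by at most as much as the corresponding
marginal when one argument varies, so it suffices to compare `F^w((F^w)⁻(u₂))` with
`F^w((F^w)⁻(u₁))`. Since `F^w` is a right-continuous step function, `F^w((F^w)⁻(u))` lies in
`[u, u + J]`, where `J` is the jump of `F^w` at `(F^w)⁻(u)`; as the `Xᵢ` are distinct, that jump
is a single weight, so `J ≤ Δ`.
-/

open Finset

/-- The weighted empirical marginal distribution function `F^w(x) = Σᵢ wᵢ 1{Xᵢ ≤ x}`. -/
noncomputable def wMarg {n : ℕ} (X w : Fin (n + 1) → ℝ) (s : ℝ) : ℝ :=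
  ∑ i, if X i ≤ s then w i else 0

/-- The weighted empirical joint distribution function
`H^w(x,y) = Σᵢ wᵢ 1{Xᵢ ≤ x, Yᵢ ≤ y}`. -/
noncomputable def wJoint {n : ℕ} (X Y w : Fin (n + 1) → ℝ) (s t : ℝ) : ℝ :=
  ∑ i, if X i ≤ s ∧ Y i ≤ t then w i else 0

/-- The left-continuous generalized inverse `K⁻(p) = inf {x : K(x) ≥ p}`. -/
noncomputable def genInv (K : ℝ → ℝ) (p : ℝ) : ℝ :=
  sInf {s : ℝ | p ≤ K s}

/-- The weighted empirical copula `Ĉ^w(u,v) = H^w((F^w)⁻(u), (G^w)⁻(v))`. -/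
noncomputable def wCop {n : ℕ} (X Y w : Fin (n + 1) → ℝ) (u v : ℝ) : ℝ :=
  wJoint X Y w (genInv (wMarg X w) u) (genInv (wMarg Y w) v)

section Marginal

variable {n : ℕ} {X w : Fin (n + 1) → ℝ}

lemma wMarg_mono (hw : ∀ i, 0 ≤ w i) : Monotone (wMarg X w) := fun s t hst =>
  sum_le_sum fun i _ => by split_ifs with hs ht <;> first | rfl | exact hw i | linarith

lemma wMarg_of_forall_le {s : ℝ} (hs : ∀ i, X i ≤ s) : wMarg X w s = ∑ i, w i :=
  sum_congr rfl fun i _ => if_pos (hs i)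

lemma wMarg_le_sum_lt (hw : ∀ i, 0 ≤ w i) {s t : ℝ} (hst : s < t) :
    wMarg X w s ≤ ∑ i, if X i < t then w i else 0 :=
  sum_le_sum fun i _ => by split_ifs with hs ht <;> first | rfl | exact hw i | linarith

lemma sum_lt_le_wMarg (hw : ∀ i, 0 ≤ w i) {t : ℝ} {k : Fin (n + 1)}
    (hk : ∀ i, X i < t → X i ≤ X k) :
    ∑ i, (if X i < t then w i else 0) ≤ wMarg X w (X k) :=
  sum_le_sum fun i _ => by
    split_ifs with ht hk' <;> first | rfl | exact hw i | exact absurd (hk i ht) hk'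

lemma wMarg_self_le (hX : Function.Injective X) (j : Fin (n + 1)) :
    wMarg X w (X j) ≤ w j + ∑ i, if X i < X j then w i else 0 := by
  rw [show w j = ∑ i, if i = j then w i else 0 by simp, wMarg, ← sum_add_distrib]
  refine sum_le_sum fun i _ => ?_
  by_cases hij : i = j
  · subst hij
    simp
  · have hne : X i ≠ X j := hX.ne hij
    split_ifs <;> first | linarith | exact absurd (lt_of_le_of_ne ‹_› hne) ‹_›

lemma exists_genInv_wMarg_eq (hX : Function.Injective X) (hw : ∀ i, 0 ≤ w i)
    (hsum : ∑ i, w i = 1) {u : ℝ} (hu : u ∈ Set.Ioc (0 : ℝ) 1) :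
    ∃ j, genInv (wMarg X w) u = X j ∧
      u ≤ wMarg X w (X j) ∧ wMarg X w (X j) ≤ u + w j := by
  obtain ⟨top, -, htop⟩ := univ.exists_max_image X univ_nonempty
  have hT : (univ.filter fun i => u ≤ wMarg X w (X i)).Nonempty :=
    ⟨top, mem_filter.2 ⟨mem_univ _, by
      rw [wMarg_of_forall_le fun i => htop i (mem_univ i), hsum]; exact hu.2⟩⟩
  obtain ⟨j, hjT, hj_min⟩ :=
    (univ.filter fun i => u ≤ wMarg X w (X i)).exists_min_image X hT
  replace hjT : u ≤ wMarg X w (X j) := (mem_filter.1 hjT).2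
  have hbelow : ∑ i, (if X i < X j then w i else 0) < u := by
    by_cases hex : ∃ i, X i < X j
    · obtain ⟨i₀, hi₀⟩ := hex
      obtain ⟨k, hk, hk_max⟩ := (univ.filter fun i => X i < X j).exists_max_image X
        ⟨i₀, mem_filter.2 ⟨mem_univ _, hi₀⟩⟩
      have hku : wMarg X w (X k) < u := lt_of_not_ge fun h =>
        (mem_filter.1 hk).2.not_ge (hj_min k (mem_filter.2 ⟨mem_univ _, h⟩))
      exact (sum_lt_le_wMarg hw fun i hi =>
        hk_max i (mem_filter.2 ⟨mem_univ _, hi⟩)).trans_lt hku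
    · push Not at hex
      simpa [fun i => not_lt.2 (hex i)] using hu.1
  have hlevel : {s | u ≤ wMarg X w s} = Set.Ici (X j) := by
    ext s
    refine ⟨fun hs => Set.mem_Ici.2 <| not_lt.1 fun hsj => ?_,
      fun hs => hjT.trans (wMarg_mono hw hs)⟩
    exact ((wMarg_le_sum_lt hw hsj).trans_lt hbelow).not_ge hs
  refine ⟨j, by rw [genInv, hlevel, csInf_Ici], hjT, ?_⟩
  linarith [wMarg_self_le (w := w) hX j]

lemma wMarg_genInv_mem_Icc (hX : Function.Injective X) (hw : ∀ i, 0 ≤ w i)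
    (hsum : ∑ i, w i = 1) {u : ℝ} (hu : u ∈ Set.Ioc (0 : ℝ) 1) :
    wMarg X w (genInv (wMarg X w) u) ∈ Set.Icc u (u + univ.sup' univ_nonempty w) := by
  obtain ⟨j, hj, hlow, hhigh⟩ := exists_genInv_wMarg_eq hX hw hsum hu
  rw [hj]
  exact ⟨hlow, hhigh.trans (by gcongr; exact le_sup' w (mem_univ j))⟩

end Marginal

section Joint

variable {n : ℕ} {X Y w : Fin (n + 1) → ℝ}

lemma wJoint_comm (s t : ℝ) : wJoint X Y w s t = wJoint Y X w t s :=
  sum_congr rfl fun _ _ => if_congr and_comm rfl rfl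

lemma abs_wJoint_sub_le_left (hw : ∀ i, 0 ≤ w i) (x₁ x₂ y : ℝ) :
    |wJoint X Y w x₂ y - wJoint X Y w x₁ y| ≤ |wMarg X w x₂ - wMarg X w x₁| := by
  wlog h : x₁ ≤ x₂ generalizing x₁ x₂
  · rw [abs_sub_comm, abs_sub_comm (wMarg X w x₂)]
    exact this x₂ x₁ (le_of_not_ge h)
  have hH : wJoint X Y w x₁ y ≤ wJoint X Y w x₂ y :=
    sum_le_sum fun i _ => by
      split_ifs with h₁ h₂ <;>
        first | rfl | exact hw i | exact absurd ⟨h₁.1.trans h, h₁.2⟩ h₂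
  have hHF : wJoint X Y w x₂ y - wJoint X Y w x₁ y ≤ wMarg X w x₂ - wMarg X w x₁ := by
    simp only [wJoint, wMarg, ← sum_sub_distrib]
    refine sum_le_sum fun i _ => ?_
    have := hw i
    split_ifs <;> simp_all; linarith
  exact abs_le_abs hHF (by linarith)

lemma abs_wJoint_sub_le_right (hw : ∀ i, 0 ≤ w i) (x y₁ y₂ : ℝ) :
    |wJoint X Y w x y₂ - wJoint X Y w x y₁| ≤ |wMarg Y w y₂ - wMarg Y w y₁| := by
  simpa only [wJoint_comm x] using abs_wJoint_sub_le_left (X := Y) (Y := X) hw y₁ y₂ x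

end Joint

lemma abs_sub_le_of_mem_Icc {a b u v d : ℝ} (ha : a ∈ Set.Icc u (u + d))
    (hb : b ∈ Set.Icc v (v + d)) : |a - b| ≤ |u - v| + d := by
  rw [abs_sub_le_iff]
  constructor <;> linarith [ha.1, ha.2, hb.1, hb.2, le_abs_self (u - v), neg_abs_le (u - v)]

/-- Lipschitz-with-jump bound for the weighted empirical copula:
`|Ĉ^w(u₂,v₂) − Ĉ^w(u₁,v₁)| ≤ |u₂ − u₁| + |v₂ − v₁| + 2Δ` on `(0,1]²`,
where `Δ = max_i w_i`. -/
theorem wCop_lipschitz_with_jump (n : ℕ) (X Y : Fin (n + 1) → ℝ)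
    (hX : Function.Injective X) (hY : Function.Injective Y)
    (w : Fin (n + 1) → ℝ) (hw : ∀ i, 0 < w i) (hsum : ∑ i, w i = 1)
    (u₁ v₁ u₂ v₂ : ℝ)
    (hu₁ : u₁ ∈ Set.Ioc (0 : ℝ) 1) (hv₁ : v₁ ∈ Set.Ioc (0 : ℝ) 1)
    (hu₂ : u₂ ∈ Set.Ioc (0 : ℝ) 1) (hv₂ : v₂ ∈ Set.Ioc (0 : ℝ) 1) :
    |wCop X Y w u₂ v₂ - wCop X Y w u₁ v₁|
      ≤ |u₂ - u₁| + |v₂ - v₁| + 2 * Finset.univ.sup' Finset.univ_nonempty w := by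
  have hw₀ : ∀ i, 0 ≤ w i := fun i => (hw i).le
  set Δ := univ.sup' univ_nonempty w
  set a₁ := genInv (wMarg X w) u₁
  set a₂ := genInv (wMarg X w) u₂
  set b₁ := genInv (wMarg Y w) v₁
  set b₂ := genInv (wMarg Y w) v₂
  calc |wJoint X Y w a₂ b₂ - wJoint X Y w a₁ b₁|
      ≤ |wJoint X Y w a₂ b₂ - wJoint X Y w a₁ b₂|
          + |wJoint X Y w a₁ b₂ - wJoint X Y w a₁ b₁| := abs_sub_le _ _ _
    _ ≤ |wMarg X w a₂ - wMarg X w a₁| + |wMarg Y w b₂ - wMarg Y w b₁| :=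
        add_le_add (abs_wJoint_sub_le_left hw₀ _ _ _) (abs_wJoint_sub_le_right hw₀ _ _ _)
    _ ≤ (|u₂ - u₁| + Δ) + (|v₂ - v₁| + Δ) :=
        add_le_add
          (abs_sub_le_of_mem_Icc (wMarg_genInv_mem_Icc hX hw₀ hsum hu₂)
            (wMarg_genInv_mem_Icc hX hw₀ hsum hu₁))
          (abs_sub_le_of_mem_Icc (wMarg_genInv_mem_Icc hY hw₀ hsum hv₂)
            (wMarg_genInv_mem_Icc hY hw₀ hsum hv₁))
    _ = |u₂ - u₁| + |v₂ - v₁| + 2 * Δ := by ring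
end
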